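/- Let 0 < α < 1, λ ≥ 0, a > 0, and let f, f̃ : [0,a] × ℝ → ℝ be continuous and bounded, with f Lipschitz in its second argument with constant L < Γ(α+1)/(2 a^α e^{λa}). If y and z are the unique continuous solutions on [0,a] of the terminal-value integral equations with right-hand sides f and f̃ respectively (and the same terminal value y_a), then sup_{t∈[0,a]} |y(t) − z(t)| ≤ (2 a^α e^{λa} / (β Γ(α+1))) · sup_{(t,u)} |f(t,u) − f̃(t,u)|, where β = 1 − 2 L a^α e^{λa}/Γ(α+1). -/

import Mathlib

/-!
The solution of the terminal-value problem depends Lipschitz-continuously on the right-hand side: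
each of the two kernel integrals in the equation is at most `e^{λa} a^α / α · C` when the
right-hand sides differ by at most `C`, and with `Γ(α + 1) = α Γ(α)` this gives the constant
`K = 2 a^α e^{λa} / Γ(α + 1)`. If `M` is the maximum of `|y - z|` on `[0, a]`, the Lipschitz
bound on `f` gives `|f(s, y s) - f̃(s, z s)| ≤ L M + ε`, hence `M ≤ K (L M + ε)`, and `K L < 1`
lets us solve for `M`.
-/

open Real Set MeasureTheory

lemma intervalIntegrable_sub_rpow {α : ℝ} (hα : 0 < α) (t : ℝ) :
    IntervalIntegrable (fun s => (t - s) ^ (α - 1)) volume 0 t := by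
  simpa using (intervalIntegral.intervalIntegrable_rpow' (a := t) (b := 0)
    (by linarith : -1 < α - 1)).comp_sub_left t

lemma integral_sub_rpow {α : ℝ} (hα : 0 < α) (t : ℝ) :
    ∫ s in (0 : ℝ)..t, (t - s) ^ (α - 1) = t ^ α / α := by
  rw [intervalIntegral.integral_comp_sub_left (fun x => x ^ (α - 1)), sub_self, sub_zero,
    integral_rpow (Or.inl (by linarith)), sub_add_cancel, zero_rpow hα.ne', sub_zero]

lemma abs_sub_le_of_lipschitz_of_abs_sub_le {φ ψ : ℝ → ℝ} {L ε : ℝ}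
    (hφ : ∀ u v, |φ u - φ v| ≤ L * |u - v|) (hφψ : ∀ u, |φ u - ψ u| ≤ ε) (u v : ℝ) :
    |φ u - ψ v| ≤ L * |u - v| + ε :=
  (abs_sub_le _ (φ v) _).trans (add_le_add (hφ u v) (hφψ v))

/-- `Γ(α) e^{λt}` times the tempered Riemann–Liouville integral of order `α` of `g` at `t`. -/
noncomputable def kernelIntegral (α lam t : ℝ) (g : ℝ → ℝ) : ℝ :=
  ∫ s in (0 : ℝ)..t, exp (lam * s) * (t - s) ^ (α - 1) * g s

noncomputable def terminalValueMap (α lam a ya : ℝ) (g : ℝ → ℝ) (t : ℝ) : ℝ :=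
  ya * exp (-lam * t) -
    (exp (-lam * t) / Gamma α) * (kernelIntegral α lam a g - kernelIntegral α lam t g)

section kernelIntegral

variable {α lam t : ℝ}

lemma intervalIntegrable_kernel (hα : 0 < α) (ht : 0 ≤ t) {g : ℝ → ℝ}
    (hg : ContinuousOn g (Icc 0 t)) :
    IntervalIntegrable (fun s => exp (lam * s) * (t - s) ^ (α - 1) * g s) volume 0 t :=
  ((intervalIntegrable_sub_rpow hα t).continuousOn_mul (by fun_prop)).mul_continuousOn
    (by rwa [uIcc_of_le ht])

lemma kernelIntegral_sub (hα : 0 < α) (ht : 0 ≤ t) {F G : ℝ → ℝ}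
    (hF : ContinuousOn F (Icc 0 t)) (hG : ContinuousOn G (Icc 0 t)) :
    kernelIntegral α lam t F - kernelIntegral α lam t G = kernelIntegral α lam t (F - G) := by
  rw [kernelIntegral, kernelIntegral, ← intervalIntegral.integral_sub
    (intervalIntegrable_kernel hα ht hF) (intervalIntegrable_kernel hα ht hG)]
  simp only [kernelIntegral, Pi.sub_apply, mul_sub]

lemma abs_kernelIntegral_le (hα : 0 < α) (hlam : 0 ≤ lam) (ht : 0 ≤ t) {T C : ℝ} (htT : t ≤ T)
    {g : ℝ → ℝ} (hg : ∀ s ∈ Icc 0 t, |g s| ≤ C) :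
    |kernelIntegral α lam t g| ≤ exp (lam * T) * C * (T ^ α / α) := by
  have hC : 0 ≤ C := (abs_nonneg _).trans (hg 0 ⟨le_rfl, ht⟩)
  have hpointwise : ∀ s ∈ Ioc 0 t,
      ‖exp (lam * s) * (t - s) ^ (α - 1) * g s‖ ≤ exp (lam * t) * C * (t - s) ^ (α - 1) := by
    intro s hs
    have hkernel : 0 ≤ (t - s) ^ (α - 1) := rpow_nonneg (sub_nonneg.2 hs.2) _
    rw [Real.norm_eq_abs, abs_mul, abs_mul, abs_of_pos (exp_pos _), abs_of_nonneg hkernel,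
      mul_right_comm (exp (lam * t))]
    gcongr
    · exact hs.2
    · exact hg s (Ioc_subset_Icc_self hs)
  calc |kernelIntegral α lam t g|
      ≤ ∫ s in (0 : ℝ)..t, exp (lam * t) * C * (t - s) ^ (α - 1) :=
        intervalIntegral.norm_integral_le_of_norm_le ht (ae_of_all _ hpointwise)
          ((intervalIntegrable_sub_rpow hα t).const_mul _)
    _ = exp (lam * t) * C * (t ^ α / α) := by
        rw [intervalIntegral.integral_const_mul, integral_sub_rpow hα]
    _ ≤ exp (lam * T) * C * (T ^ α / α) := by gcongr

end kernelIntegral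

lemma abs_terminalValueMap_sub_le {α lam a ya t C : ℝ} (hα : 0 < α) (hlam : 0 ≤ lam)
    (ht : t ∈ Icc 0 a) {F G : ℝ → ℝ} (hF : ContinuousOn F (Icc 0 a))
    (hG : ContinuousOn G (Icc 0 a)) (hFG : ∀ s ∈ Icc 0 a, |F s - G s| ≤ C) :
    |terminalValueMap α lam a ya F t - terminalValueMap α lam a ya G t| ≤
      2 * a ^ α * exp (lam * a) / Gamma (α + 1) * C := by
  have ha : 0 ≤ a := ht.1.trans ht.2
  have hta : Icc 0 t ⊆ Icc 0 a := Icc_subset_Icc_right ht.2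
  set B := exp (lam * a) * C * (a ^ α / α) with hB
  have hdiff : terminalValueMap α lam a ya F t - terminalValueMap α lam a ya G t =
      -(exp (-lam * t) / Gamma α) *
        (kernelIntegral α lam a (F - G) - kernelIntegral α lam t (F - G)) := by
    rw [← kernelIntegral_sub hα ha hF hG, ← kernelIntegral_sub hα ht.1 (hF.mono hta) (hG.mono hta),
      terminalValueMap, terminalValueMap]
    ring
  have hweight : |-(exp (-lam * t) / Gamma α)| ≤ 1 / Gamma α := by
    rw [abs_neg, abs_of_pos (by positivity)]
    gcongr
    exact exp_le_one_iff.2 (by nlinarith [ht.1])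
  have hkernels : |kernelIntegral α lam a (F - G) - kernelIntegral α lam t (F - G)| ≤ B + B :=
    (abs_sub _ _).trans (add_le_add (abs_kernelIntegral_le hα hlam ha le_rfl hFG)
      (abs_kernelIntegral_le hα hlam ht.1 ht.2 fun s hs => hFG s (hta hs)))
  calc _ ≤ 1 / Gamma α * (B + B) := by
        rw [hdiff, abs_mul]
        exact mul_le_mul hweight hkernels (abs_nonneg _) (by positivity)
    _ = 2 * a ^ α * exp (lam * a) / Gamma (α + 1) * C := by
        rw [Gamma_add_one hα.ne', hB]
        field_simp
        ring

theorem continuous_dependence_rhs_general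
    (α lam a ya L ε : ℝ) (hα0 : 0 < α) (hlam : 0 ≤ lam) (ha : 0 < a)
    (f ftilde : ℝ → ℝ → ℝ)
    (hf : Continuous fun p : ℝ × ℝ => f p.1 p.2)
    (hftilde : Continuous fun p : ℝ × ℝ => ftilde p.1 p.2)
    (hL : ∀ t ∈ Set.Icc (0 : ℝ) a, ∀ u v : ℝ, |f t u - f t v| ≤ L * |u - v|)
    (hLsmall : L < Real.Gamma (α + 1) / (2 * a ^ α * Real.exp (lam * a)))
    (hε : ∀ t ∈ Set.Icc (0 : ℝ) a, ∀ u : ℝ, |f t u - ftilde t u| ≤ ε)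
    (y z : ℝ → ℝ) (hy : ContinuousOn y (Set.Icc 0 a)) (hz : ContinuousOn z (Set.Icc 0 a))
    (hyeq : ∀ t ∈ Set.Icc (0 : ℝ) a,
      y t = ya * Real.exp (-lam * t) -
        (Real.exp (-lam * t) / Real.Gamma α) *
          ((∫ s in (0 : ℝ)..a, Real.exp (lam * s) * (a - s) ^ (α - 1) * f s (y s)) -
            ∫ s in (0 : ℝ)..t, Real.exp (lam * s) * (t - s) ^ (α - 1) * f s (y s)))
    (hzeq : ∀ t ∈ Set.Icc (0 : ℝ) a,
      z t = ya * Real.exp (-lam * t) -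
        (Real.exp (-lam * t) / Real.Gamma α) *
          ((∫ s in (0 : ℝ)..a, Real.exp (lam * s) * (a - s) ^ (α - 1) * ftilde s (z s)) -
            ∫ s in (0 : ℝ)..t, Real.exp (lam * s) * (t - s) ^ (α - 1) * ftilde s (z s))) :
    ∀ t ∈ Set.Icc (0 : ℝ) a,
      |y t - z t| ≤
        (2 * a ^ α * Real.exp (lam * a) /
            ((1 - 2 * L * a ^ α * Real.exp (lam * a) / Real.Gamma (α + 1)) *
              Real.Gamma (α + 1))) * ε := by
  have hΓ : 0 < Gamma (α + 1) := Gamma_pos_of_pos (by linarith)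
  set K := 2 * a ^ α * exp (lam * a) / Gamma (α + 1) with hK
  have hKL : K * L < 1 := by
    rw [lt_div_iff₀ (by positivity)] at hLsmall
    rw [hK, div_mul_eq_mul_div, div_lt_one hΓ]
    linarith
  have hL0 : 0 ≤ L := by simpa using (abs_nonneg _).trans (hL 0 ⟨le_rfl, ha.le⟩ 1 0)
  obtain ⟨t₀, ht₀, hmax⟩ :=
    isCompact_Icc.exists_isMaxOn (nonempty_Icc.2 ha.le) (hy.sub hz).abs
  set M := |y t₀ - z t₀|
  have hM : ∀ s ∈ Icc 0 a, |y s - z s| ≤ M := fun s hs => hmax hs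
  have hrhs : ∀ s ∈ Icc 0 a, |f s (y s) - ftilde s (z s)| ≤ L * M + ε := fun s hs =>
    (abs_sub_le_of_lipschitz_of_abs_sub_le (hL s hs) (hε s hs) _ _).trans
      (by gcongr; exact hM s hs)
  have hstab : M ≤ K * (L * M + ε) := by
    change |y t₀ - z t₀| ≤ _
    rw [hyeq t₀ ht₀, hzeq t₀ ht₀]
    exact abs_terminalValueMap_sub_le hα0 hlam ht₀
      (hf.comp_continuousOn (continuousOn_id.prodMk hy))
      (hftilde.comp_continuousOn (continuousOn_id.prodMk hz)) hrhs
  have hMbound : M ≤ K * ε / (1 - K * L) := by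
    rw [le_div_iff₀ (by linarith)]
    linarith
  intro t ht
  refine (hM t ht).trans (hMbound.trans_eq ?_)
  rw [hK]
  field_simp

/-- continuous dependence of the solution on the right-hand side f. -/
theorem continuous_dependence_rhs
    (α lam a ya L ε : ℝ) (hα0 : 0 < α) (hα1 : α < 1) (hlam : 0 ≤ lam) (ha : 0 < a)
    (f ftilde : ℝ → ℝ → ℝ)
    (hf : Continuous fun p : ℝ × ℝ => f p.1 p.2)
    (hftilde : Continuous fun p : ℝ × ℝ => ftilde p.1 p.2)
    (hL : ∀ t ∈ Set.Icc (0 : ℝ) a, ∀ u v : ℝ, |f t u - f t v| ≤ L * |u - v|)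
    (hLsmall : L < Real.Gamma (α + 1) / (2 * a ^ α * Real.exp (lam * a)))
    (hε : ∀ t ∈ Set.Icc (0 : ℝ) a, ∀ u : ℝ, |f t u - ftilde t u| ≤ ε)
    (y z : ℝ → ℝ) (hy : ContinuousOn y (Set.Icc 0 a)) (hz : ContinuousOn z (Set.Icc 0 a))
    (hyeq : ∀ t ∈ Set.Icc (0 : ℝ) a,
      y t = ya * Real.exp (-lam * t) -
        (Real.exp (-lam * t) / Real.Gamma α) *
          ((∫ s in (0 : ℝ)..a, Real.exp (lam * s) * (a - s) ^ (α - 1) * f s (y s)) -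
            ∫ s in (0 : ℝ)..t, Real.exp (lam * s) * (t - s) ^ (α - 1) * f s (y s)))
    (hzeq : ∀ t ∈ Set.Icc (0 : ℝ) a,
      z t = ya * Real.exp (-lam * t) -
        (Real.exp (-lam * t) / Real.Gamma α) *
          ((∫ s in (0 : ℝ)..a, Real.exp (lam * s) * (a - s) ^ (α - 1) * ftilde s (z s)) -
            ∫ s in (0 : ℝ)..t, Real.exp (lam * s) * (t - s) ^ (α - 1) * ftilde s (z s))) :
    ∀ t ∈ Set.Icc (0 : ℝ) a,
      |y t - z t| ≤
        (2 * a ^ α * Real.exp (lam * a) /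
            ((1 - 2 * L * a ^ α * Real.exp (lam * a) / Real.Gamma (α + 1)) *
              Real.Gamma (α + 1))) * ε :=
  continuous_dependence_rhs_general α lam a ya L ε hα0 hlam ha f ftilde hf hftilde hL hLsmall hε y z
    hy hz hyeq hzeq
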